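/- arXiv:2310.02563 — 2 statements merged into one kernel-verified Lean document; each statement's English description precedes it below -/
import Mathlib

section
/- Let E be a real normed vector space, K ≥ 1, and B a nonempty finite set (a batch). For each s ∈ B let v_s : Fin K → E and p_s : Fin K → ℝ be given, and for a class index c ∈ Fin K define the per-sample gradient g(c, s) = Σ_{i ∈ Fin K} (p_s(i) − if i = c then 1 else 0) • v_s(i), and for a labelling c : B → Fin K define the batch gradient G(c) = (1/|B|) · Σ_{s ∈ B} g(c(s), s). If two labellings c', c'' : B → Fin K agree on every s ∈ B except possibly one element s₀, then ‖G(c') − G(c'')‖ ≤ (2/|B|) · max_{i ∈ Fin K, s ∈ B} ‖v_s(i)‖. (Sensitivity bound Δ S_B(w) = (2/|B|) max_{i,s} ‖∂z_i(s)/∂w‖₂ of Appendix B.) -/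
/-- Sensitivity bound of Appendix B: if two labellings `c'`, `c''` of a batch `B` agree
on every sample except possibly one element `s₀`, then the batch gradients
`G(c) = (1/|B|) • ∑ s ∈ B, ∑ i, (p s i - 1_{c s}(i)) • v s i` satisfy
`‖G(c') - G(c'')‖ ≤ (2/|B|) • max_{i, s ∈ B} ‖v s i‖`. -/
theorem batch_gradient_sensitivity_bound
    {E : Type*} [NormedAddCommGroup E] [NormedSpace ℝ E] {S : Type*}
    {K : ℕ} (hK : 1 ≤ K) (B : Finset S) (hB : B.Nonempty)
    (v : S → Fin K → E) (p : S → Fin K → ℝ)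
    (c' c'' : S → Fin K) (s₀ : S)
    (hagree : ∀ s ∈ B, s ≠ s₀ → c' s = c'' s) :
    ‖(1 / (B.card : ℝ)) • ∑ s ∈ B, (∑ i, (p s i - (if i = c' s then (1 : ℝ) else 0)) • v s i) -
        (1 / (B.card : ℝ)) • ∑ s ∈ B, (∑ i, (p s i - (if i = c'' s then (1 : ℝ) else 0)) • v s i)‖ ≤
      (2 / (B.card : ℝ)) *
        B.sup' hB (fun s => Finset.univ.sup' ⟨⟨0, hK⟩, Finset.mem_univ _⟩ (fun i => ‖v s i‖)) := by
  classical
  set M := B.sup' hB (fun s => Finset.univ.sup' ⟨⟨0, hK⟩, Finset.mem_univ _⟩ (fun i => ‖v s i‖))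
    with hMdef
  have hn : (0:ℝ) < (B.card : ℝ) := by exact_mod_cast Finset.card_pos.mpr hB
  have hM : 0 ≤ M := by
    obtain ⟨s, hs⟩ := hB
    calc (0:ℝ) ≤ ‖v s ⟨0, hK⟩‖ := norm_nonneg _
      _ ≤ Finset.univ.sup' ⟨⟨0, hK⟩, Finset.mem_univ _⟩ (fun i => ‖v s i‖) :=
          Finset.le_sup' (fun i => ‖v s i‖) (Finset.mem_univ _)
      _ ≤ M := Finset.le_sup'
          (fun s => Finset.univ.sup' ⟨⟨0, hK⟩, Finset.mem_univ _⟩ (fun i => ‖v s i‖)) hs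
  have hvM : ∀ s ∈ B, ∀ i, ‖v s i‖ ≤ M := by
    intro s hs i
    calc ‖v s i‖ ≤ Finset.univ.sup' ⟨⟨0, hK⟩, Finset.mem_univ _⟩ (fun i => ‖v s i‖) :=
          Finset.le_sup' (fun i => ‖v s i‖) (Finset.mem_univ _)
      _ ≤ M := Finset.le_sup'
          (fun s => Finset.univ.sup' ⟨⟨0, hK⟩, Finset.mem_univ _⟩ (fun i => ‖v s i‖)) hs
  rw [← smul_sub, ← Finset.sum_sub_distrib]
  have hterm : ∀ s, (∑ i, (p s i - (if i = c' s then (1:ℝ) else 0)) • v s i) -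
      (∑ i, (p s i - (if i = c'' s then (1:ℝ) else 0)) • v s i)
      = v s (c'' s) - v s (c' s) := by
    intro s
    rw [← Finset.sum_sub_distrib]
    have hcg : ∀ i ∈ Finset.univ, ((p s i - (if i = c' s then (1:ℝ) else 0)) • v s i -
        (p s i - (if i = c'' s then (1:ℝ) else 0)) • v s i)
        = (if i = c'' s then (1:ℝ) else 0) • v s i - (if i = c' s then (1:ℝ) else 0) • v s i := by
      intro i _
      rw [← sub_smul, ← sub_smul]
      ring_nf
    rw [Finset.sum_congr rfl hcg, Finset.sum_sub_distrib]
    simp [ite_smul, Finset.sum_ite_eq']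
  rw [Finset.sum_congr rfl (fun s _ => hterm s)]
  have hsum : ∑ s ∈ B, (v s (c'' s) - v s (c' s))
      = if s₀ ∈ B then v s₀ (c'' s₀) - v s₀ (c' s₀) else 0 := by
    split_ifs with h
    · apply Finset.sum_eq_single_of_mem s₀ h
      intro s hs hne
      rw [hagree s hs hne]; simp
    · apply Finset.sum_eq_zero
      intro s hs
      rw [hagree s hs (fun e => h (e ▸ hs))]; simp
  rw [hsum]
  split_ifs with h
  · rw [norm_smul]
    have h1 : ‖v s₀ (c'' s₀) - v s₀ (c' s₀)‖ ≤ 2 * M := by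
      calc ‖v s₀ (c'' s₀) - v s₀ (c' s₀)‖ ≤ ‖v s₀ (c'' s₀)‖ + ‖v s₀ (c' s₀)‖ := norm_sub_le _ _
        _ ≤ 2 * M := by
            have := hvM s₀ h (c'' s₀); have := hvM s₀ h (c' s₀); linarith
    have hnorm1 : ‖(1 / (B.card : ℝ))‖ = 1 / (B.card : ℝ) := by
      rw [Real.norm_of_nonneg]; positivity
    rw [hnorm1]
    calc (1 / (B.card : ℝ)) * ‖v s₀ (c'' s₀) - v s₀ (c' s₀)‖
        ≤ (1 / (B.card : ℝ)) * (2 * M) := by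
          apply mul_le_mul_of_nonneg_left h1; positivity
      _ = (2 / (B.card : ℝ)) * M := by ring
  · rw [smul_zero, norm_zero]
    positivity
end

section
/- Let p ≥ 1 be an integer, k an integer, and e a real number with |e| < 1/(2p). Then the nearest multiple of 1/p to k/p + e is k/p; equivalently, rounding p·(k/p + e) to the nearest integer gives k. Hence TLWE decryption, which computes m* = b − ⟨s, a⟩ = m + e and returns the nearest element of the plaintext space P = {0, 1/p, …, (p−1)/p} to m*, correctly recovers the plaintext m = k/p whenever the noise satisfies |e| < 1/(2p). -/
/-!
Multiplying by `p` turns `k/p + e` into the integer `k` shifted by `p * e`, and `|p * e| < 1/2`,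
so `k` is the unique integer nearest to it.
-/

section

variable {α : Type*} [Field α] [LinearOrder α] [IsStrictOrderedRing α]

theorem abs_mul_lt_half_of_abs_lt_one_div_two_mul {p e : α} (hp : 0 < p) (he : |e| < 1 / (2 * p)) :
    |p * e| < 1 / 2 :=
  calc |p * e| = p * |e| := by rw [abs_mul, abs_of_pos hp]
    _ < p * (1 / (2 * p)) := mul_lt_mul_of_pos_left he hp
    _ = 1 / 2 := by field_simp

theorem round_eq_of_abs_sub_lt_half [FloorRing α] {x : α} {n : ℤ} (h : |x - n| < 1 / 2) :
    round x = n := by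
  obtain ⟨hlo, hhi⟩ := abs_sub_lt_iff.1 h
  exact round_eq_iff.2 ⟨by linarith, by linarith⟩

end

/-- TLWE decryption rounding correctness: for an integer `p ≥ 1`, an integer `k` and a
noise term `e` with `|e| < 1/(2p)`, the nearest multiple of `1/p` to `k/p + e` is `k/p`;
equivalently, rounding `p * (k/p + e)` to the nearest integer gives `k`. -/
theorem tlwe_round_correct (p k : ℤ) (hp : 1 ≤ p) (e : ℝ) (he : |e| < 1 / (2 * (p : ℝ))) :
    (round ((p : ℝ) * ((k : ℝ) / (p : ℝ) + e)) : ℝ) / (p : ℝ) = (k : ℝ) / (p : ℝ) ∧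
      round ((p : ℝ) * ((k : ℝ) / (p : ℝ) + e)) = k := by
  have hp0 : (0 : ℝ) < p := by exact_mod_cast hp
  have hround : round ((p : ℝ) * ((k : ℝ) / (p : ℝ) + e)) = k := by
    apply round_eq_of_abs_sub_lt_half
    rw [mul_add, mul_div_cancel₀ _ hp0.ne', add_sub_cancel_left]
    exact abs_mul_lt_half_of_abs_lt_one_div_two_mul hp0 he
  exact ⟨by rw [hround], hround⟩
end
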